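/- arXiv:2310.03371 — 3 statements merged into one kernel-verified Lean document; each statement's English description precedes it below -/
import Mathlib

section
/- Let M > 0, I ≥ 1 an integer, and x, y ∈ [−M, M]. Let U₁,…,U_I be i.i.d. uniform on [−M, M] and X̂ = (2M/I)·Σ_{i=1}^I (𝟙{Uᵢ ≤ x} − 𝟙{Uᵢ ≤ y}) + y. Then E[(X̂ − x)²] ≤ (2M/I)·|x − y|. -/
open MeasureTheory

noncomputable def uniformIcc (M : ℝ) : Measure ℝ :=
  (ENNReal.ofReal (2 * M))⁻¹ • volume.restrict (Set.Icc (-M) M)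

lemma uniformIcc_apply (M : ℝ) (hM : 0 < M) (s : Set ℝ) (hs : MeasurableSet s) :
    uniformIcc M s = (ENNReal.ofReal (2 * M))⁻¹ * volume (s ∩ Set.Icc (-M) M) := by
  rw [uniformIcc, Measure.smul_apply, Measure.restrict_apply hs, smul_eq_mul]

instance uniformIcc_prob (M : ℝ) [Fact (0 < M)] : IsProbabilityMeasure (uniformIcc M) := by
  have hM : 0 < M := Fact.out
  constructor
  rw [uniformIcc_apply M hM _ MeasurableSet.univ, Set.univ_inter, Real.volume_Icc]
  rw [show M - (-M) = 2 * M by ring]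
  rw [ENNReal.inv_mul_cancel (by simp [hM]) ENNReal.ofReal_ne_top]

lemma uniformIcc_toReal (M : ℝ) (hM : 0 < M) (s : Set ℝ) (hs : MeasurableSet s)
    (a b : ℝ) (h : s ∩ Set.Icc (-M) M = Set.Icc a b) (hab : a ≤ b) :
    (uniformIcc M s).toReal = (b - a) / (2 * M) := by
  rw [uniformIcc_apply M hM s hs, h, Real.volume_Icc, ENNReal.toReal_mul,
    ENNReal.toReal_inv, ENNReal.toReal_ofReal (by positivity), ENNReal.toReal_ofReal (by linarith)]
  ring

lemma daq_int_ind (M : ℝ) (hM : 0 < M) (a : ℝ) (ha : a ∈ Set.Icc (-M) M) :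
    ∫ u, (if u ≤ a then (1:ℝ) else 0) ∂uniformIcc M = (a + M) / (2 * M) := by
  have h1 : (fun u => if u ≤ a then (1:ℝ) else 0) = Set.indicator (Set.Iic a) (fun _ => 1) := by
    ext u; simp [Set.indicator_apply, Set.mem_Iic]
  rw [h1, integral_indicator measurableSet_Iic, setIntegral_const, smul_eq_mul, mul_one]
  rw [measureReal_def, uniformIcc_toReal M hM _ measurableSet_Iic (-M) a _ ha.1]
  · ring_nf
  · ext u; simp only [Set.mem_inter_iff, Set.mem_Iic, Set.mem_Icc]
    constructor
    · rintro ⟨h1, h2, h3⟩; exact ⟨h2, h1⟩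
    · rintro ⟨h1, h2⟩; exact ⟨h2, h1, le_trans h2 ha.2⟩

lemma daq_int_sq_le (M : ℝ) (hM : 0 < M) (a b : ℝ) (hab : a ≤ b)
    (ha : -M ≤ a) (hb : b ≤ M) :
    ∫ u, ((if u ≤ b then (1:ℝ) else 0) - (if u ≤ a then (1:ℝ) else 0)) ^ 2 ∂uniformIcc M
      = (b - a) / (2 * M) := by
  have h1 : (fun u => ((if u ≤ b then (1:ℝ) else 0) - (if u ≤ a then (1:ℝ) else 0)) ^ 2)
      = Set.indicator (Set.Ioc a b) (fun _ => 1) := by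
    ext u
    simp only [Set.indicator_apply, Set.mem_Ioc]
    by_cases h2 : u ≤ a
    · simp [h2, le_trans h2 hab, not_lt.mpr h2]
    · by_cases h3 : u ≤ b
      · simp [h2, h3, not_le.mp h2]
      · simp [h2, h3]
  rw [h1, integral_indicator measurableSet_Ioc, setIntegral_const, smul_eq_mul, mul_one]
  have hIoc : uniformIcc M (Set.Ioc a b) = (ENNReal.ofReal (2*M))⁻¹ * volume (Set.Ioc a b) := by
    rw [uniformIcc_apply M hM _ measurableSet_Ioc, Set.inter_eq_left.mpr]
    intro u hu; exact ⟨le_trans ha (le_of_lt hu.1), le_trans hu.2 hb⟩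
  rw [measureReal_def, hIoc, Real.volume_Ioc, ENNReal.toReal_mul, ENNReal.toReal_inv,
    ENNReal.toReal_ofReal (by positivity), ENNReal.toReal_ofReal (by linarith)]
  ring

lemma daq_ind_meas (a : ℝ) : Measurable (fun u => if u ≤ a then (1:ℝ) else 0) := by
  have : MeasurableSet {u : ℝ | u ≤ a} := measurableSet_Iic
  exact Measurable.ite this measurable_const measurable_const

lemma daq_ind_integrable (M : ℝ) (hM : 0 < M) (a : ℝ) :
    Integrable (fun u => if u ≤ a then (1:ℝ) else 0) (uniformIcc M) := by
  haveI : Fact (0 < M) := ⟨hM⟩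
  have h1 : (fun u => if u ≤ a then (1:ℝ) else 0) = Set.indicator (Set.Iic a) (fun _ => 1) := by
    ext u; simp [Set.indicator_apply, Set.mem_Iic]
  rw [h1]
  exact (integrable_const (1:ℝ)).indicator measurableSet_Iic

lemma daq_D_meas (x y : ℝ) :
    Measurable (fun u => (if u ≤ x then (1:ℝ) else 0) - (if u ≤ y then (1:ℝ) else 0)) :=
  (daq_ind_meas x).sub (daq_ind_meas y)

lemma daq_D_integrable (M : ℝ) (hM : 0 < M) (x y : ℝ) :
    Integrable (fun u => (if u ≤ x then (1:ℝ) else 0) - (if u ≤ y then (1:ℝ) else 0))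
      (uniformIcc M) :=
  (daq_ind_integrable M hM x).sub (daq_ind_integrable M hM y)

lemma daq_D_bdd (x y : ℝ) (u : ℝ) :
    ‖(if u ≤ x then (1:ℝ) else 0) - (if u ≤ y then (1:ℝ) else 0)‖ ≤ 1 := by
  by_cases h1 : u ≤ x <;> by_cases h2 : u ≤ y <;> simp [h1, h2]

lemma daq_Dsq_integrable (M : ℝ) (hM : 0 < M) (x y : ℝ) :
    Integrable (fun u => ((if u ≤ x then (1:ℝ) else 0) - (if u ≤ y then (1:ℝ) else 0))
      * ((if u ≤ x then (1:ℝ) else 0) - (if u ≤ y then (1:ℝ) else 0))) (uniformIcc M) :=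
  (daq_D_integrable M hM x y).bdd_mul (daq_D_meas x y).aestronglyMeasurable
    (ae_of_all _ (daq_D_bdd x y))

lemma daq_int_D (M : ℝ) (hM : 0 < M) (x y : ℝ)
    (hx : x ∈ Set.Icc (-M) M) (hy : y ∈ Set.Icc (-M) M) :
    ∫ u, ((if u ≤ x then (1:ℝ) else 0) - (if u ≤ y then (1:ℝ) else 0)) ∂uniformIcc M
      = (x - y) / (2 * M) := by
  rw [integral_sub (daq_ind_integrable M hM x) (daq_ind_integrable M hM y),
    daq_int_ind M hM x hx, daq_int_ind M hM y hy]
  ring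

lemma daq_int_Dsq (M : ℝ) (hM : 0 < M) (x y : ℝ)
    (hx : x ∈ Set.Icc (-M) M) (hy : y ∈ Set.Icc (-M) M) :
    ∫ u, ((if u ≤ x then (1:ℝ) else 0) - (if u ≤ y then (1:ℝ) else 0))
        * ((if u ≤ x then (1:ℝ) else 0) - (if u ≤ y then (1:ℝ) else 0)) ∂uniformIcc M
      = |x - y| / (2 * M) := by
  rcases le_total y x with h | h
  · rw [abs_of_nonneg (by linarith)]
    rw [show (fun u => ((if u ≤ x then (1:ℝ) else 0) - (if u ≤ y then (1:ℝ) else 0))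
        * ((if u ≤ x then (1:ℝ) else 0) - (if u ≤ y then (1:ℝ) else 0)))
      = (fun u => ((if u ≤ x then (1:ℝ) else 0) - (if u ≤ y then (1:ℝ) else 0)) ^ 2)
      from funext fun u => by ring]
    exact daq_int_sq_le M hM y x h hy.1 hx.2
  · rw [abs_of_nonpos (by linarith)]
    rw [show (fun u => ((if u ≤ x then (1:ℝ) else 0) - (if u ≤ y then (1:ℝ) else 0))
        * ((if u ≤ x then (1:ℝ) else 0) - (if u ≤ y then (1:ℝ) else 0)))
      = (fun u => ((if u ≤ y then (1:ℝ) else 0) - (if u ≤ x then (1:ℝ) else 0)) ^ 2)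
      from funext fun u => by ring]
    rw [daq_int_sq_le M hM x y h hx.1 hy.2]
    ring

section Pi
variable {E : Type*} [MeasureSpace E] [SigmaFinite (volume : Measure E)]
  [IsProbabilityMeasure (volume : Measure E)]
  {ι : Type*} [Fintype ι] [DecidableEq ι]

omit [MeasureSpace E] [SigmaFinite (volume : Measure E)] [IsProbabilityMeasure (volume : Measure E)] in
lemma daq_single_as_prod (i : ι) (f : E → ℝ) (x : ι → E) :
    f (x i) = ∏ k, (fun k u => if k = i then f u else 1) k (x k) := by
  rw [Finset.prod_eq_single i (fun b _ hb => by simp [hb]) (by simp)]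
  simp

omit [MeasureSpace E] [SigmaFinite (volume : Measure E)] [IsProbabilityMeasure (volume : Measure E)] in
lemma daq_pair_as_prod {i j : ι} (hij : i ≠ j) (f g : E → ℝ) (x : ι → E) :
    f (x i) * g (x j)
      = ∏ k, (fun k u => if k = i then f u else if k = j then g u else 1) k (x k) := by
  rw [← Finset.mul_prod_erase Finset.univ _ (Finset.mem_univ i),
    ← Finset.mul_prod_erase _ _ (Finset.mem_erase.mpr ⟨hij.symm, Finset.mem_univ j⟩),
    Finset.prod_eq_one (fun k hk => by
      rcases Finset.mem_erase.mp hk with ⟨hkj, hk2⟩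
      rcases Finset.mem_erase.mp hk2 with ⟨hki, -⟩
      simp [hki, hkj])]
  simp [hij, hij.symm]

lemma daq_pi_single (i : ι) (f : E → ℝ) :
    ∫ x : ι → E, f (x i) = ∫ u, f u := by
  calc ∫ x : ι → E, f (x i)
      = ∫ x : ι → E, ∏ k, (fun k u => if k = i then f u else 1) k (x k) := by
        congr 1; funext x; exact daq_single_as_prod i f x
    _ = ∏ k, ∫ u, (fun k u => if k = i then f u else 1) k u :=
        MeasureTheory.integral_fintype_prod_eq_prod (ι := ι) (E := fun _ => E)
          (fun k u => if k = i then f u else 1)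
    _ = ∫ u, f u := by
        rw [Finset.prod_eq_single i (fun b _ hb => by simp [hb]) (by simp)]
        simp

lemma daq_pi_pair {i j : ι} (hij : i ≠ j) (f g : E → ℝ) :
    ∫ x : ι → E, f (x i) * g (x j) = (∫ u, f u) * ∫ u, g u := by
  calc ∫ x : ι → E, f (x i) * g (x j)
      = ∫ x : ι → E, ∏ k, (fun k u => if k = i then f u else if k = j then g u else 1) k (x k) := by
        congr 1; funext x; exact daq_pair_as_prod hij f g x
    _ = ∏ k, ∫ u, (fun k u => if k = i then f u else if k = j then g u else 1) k u :=
        MeasureTheory.integral_fintype_prod_eq_prod (ι := ι) (E := fun _ => E)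
          (fun k u => if k = i then f u else if k = j then g u else 1)
    _ = (∫ u, f u) * ∫ u, g u := by
        rw [← Finset.mul_prod_erase Finset.univ _ (Finset.mem_univ i),
          ← Finset.mul_prod_erase _ _ (Finset.mem_erase.mpr ⟨hij.symm, Finset.mem_univ j⟩),
          Finset.prod_eq_one (fun k hk => by
            rcases Finset.mem_erase.mp hk with ⟨hkj, hk2⟩
            rcases Finset.mem_erase.mp hk2 with ⟨hki, -⟩
            simp [hki, hkj])]
        simp [hij, hij.symm]

lemma daq_pi_single_integrable (i : ι) (f : E → ℝ) (hf : Integrable f) :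
    Integrable (fun x : ι → E => f (x i)) := by
  have h : (fun x : ι → E => f (x i))
      = fun x : ι → E => ∏ k, (fun k u => if k = i then f u else 1) k (x k) :=
    funext fun x => daq_single_as_prod i f x
  rw [h]
  refine Integrable.fintype_prod (f := fun k u => if k = i then f u else 1) (fun k => ?_)
  by_cases hk : k = i
  · simpa [hk] using hf
  · simp only [hk, if_false]; exact integrable_const 1

lemma daq_pi_pair_integrable {i j : ι} (hij : i ≠ j) (f g : E → ℝ)
    (hf : Integrable f) (hg : Integrable g) :
    Integrable (fun x : ι → E => f (x i) * g (x j)) := by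
  have h : (fun x : ι → E => f (x i) * g (x j))
      = fun x : ι → E => ∏ k, (fun k u => if k = i then f u else if k = j then g u else 1)
          k (x k) :=
    funext fun x => daq_pair_as_prod hij f g x
  rw [h]
  refine Integrable.fintype_prod
    (f := fun k u => if k = i then f u else if k = j then g u else 1) (fun k => ?_)
  by_cases hk : k = i
  · simpa [hk] using hf
  · by_cases hk2 : k = j
    · simpa [hk2, hij.symm] using hg
    · simp only [hk, hk2, if_false]; exact integrable_const 1

end Pi

/-- MSE bound for the boosted DAQ Wyner–Ziv estimator: with `x, y ∈ [-M, M]`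
and `U₁,…,U_I` i.i.d. uniform on `[-M, M]`,
`X̂ = (2M/I)·Σᵢ (𝟙{Uᵢ ≤ x} − 𝟙{Uᵢ ≤ y}) + y` satisfies
`E[(X̂ − x)²] ≤ (2M/I)·|x − y|`. -/
theorem daq_mse (M : ℝ) (hM : 0 < M) (I : ℕ) (hI : 1 ≤ I)
    (x y : ℝ) (hx : x ∈ Set.Icc (-M) M) (hy : y ∈ Set.Icc (-M) M) :
    ∫ U : Fin I → ℝ,
        ((2 * M / I) * ∑ i : Fin I,
          ((if U i ≤ x then (1 : ℝ) else 0) - (if U i ≤ y then (1 : ℝ) else 0)) + y - x) ^ 2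
      ∂(Measure.pi fun _ : Fin I => uniformIcc M) ≤ (2 * M / I) * |x - y| := by
  haveI : Fact (0 < M) := ⟨hM⟩
  letI : MeasureSpace ℝ := ⟨uniformIcc M⟩
  haveI : IsProbabilityMeasure (volume : Measure ℝ) := uniformIcc_prob M
  have hvol : (Measure.pi fun _ : Fin I => uniformIcc M) = (volume : Measure (Fin I → ℝ)) := rfl
  rw [hvol]
  set D : ℝ → ℝ := fun u => (if u ≤ x then (1:ℝ) else 0) - (if u ≤ y then (1:ℝ) else 0)
    with hD
  set c : ℝ := 2 * M / I with hc
  set A : ℝ := (x - y) / (2 * M) with hA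
  set B : ℝ := |x - y| / (2 * M) with hB
  show ∫ U : Fin I → ℝ, (c * ∑ i : Fin I, D (U i) + y - x) ^ 2 ≤ c * |x - y|
  -- scalar facts
  have hDint : Integrable D := daq_D_integrable M hM x y
  have hD2int : Integrable (fun u => D u * D u) := daq_Dsq_integrable M hM x y
  have hintD : ∫ u, D u = A := daq_int_D M hM x y hx hy
  have hintD2 : ∫ u, D u * D u = B := daq_int_Dsq M hM x y hx hy
  -- pi facts
  have hQ : ∀ i : Fin I, ∫ U : Fin I → ℝ, D (U i) = A := fun i => by
    rw [daq_pi_single i D]; exact hintD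
  have hPii : ∀ i : Fin I, ∫ U : Fin I → ℝ, D (U i) * D (U i) = B := fun i => by
    have h : (fun U : Fin I → ℝ => D (U i) * D (U i)) = fun U => (fun u => D u * D u) (U i) :=
      rfl
    rw [h, daq_pi_single i (fun u => D u * D u)]; exact hintD2
  have hPij : ∀ i j : Fin I, i ≠ j → ∫ U : Fin I → ℝ, D (U i) * D (U j) = A * A :=
    fun i j hij => by rw [daq_pi_pair hij D D, hintD]
  have IntQ : ∀ i : Fin I, Integrable (fun U : Fin I → ℝ => D (U i)) := fun i =>
    daq_pi_single_integrable i D hDint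
  have IntP : ∀ i j : Fin I, Integrable (fun U : Fin I → ℝ => D (U i) * D (U j)) := by
    intro i j
    by_cases hij : i = j
    · subst hij; exact daq_pi_single_integrable i (fun u => D u * D u) hD2int
    · exact daq_pi_pair_integrable hij D D hDint hDint
  -- expand the square
  have expand : (fun U : Fin I → ℝ => (c * ∑ i : Fin I, D (U i) + y - x) ^ 2)
      = fun U : Fin I → ℝ => (∑ i : Fin I, ∑ j : Fin I, c ^ 2 * (D (U i) * D (U j)))
          + ((∑ i : Fin I, 2 * c * (y - x) * D (U i)) + (y - x) ^ 2) := by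
    funext U
    have h1 : (∑ i : Fin I, D (U i)) * (∑ j : Fin I, D (U j))
        = ∑ i : Fin I, ∑ j : Fin I, D (U i) * D (U j) := Finset.sum_mul_sum _ _ _ _
    calc (c * ∑ i : Fin I, D (U i) + y - x) ^ 2
        = c ^ 2 * ((∑ i : Fin I, D (U i)) * (∑ j : Fin I, D (U j)))
            + (2 * c * (y - x) * ∑ i : Fin I, D (U i) + (y - x) ^ 2) := by ring
      _ = _ := by rw [h1]; simp only [Finset.mul_sum]
  rw [expand]
  have IntSum1 : Integrable
      (fun U : Fin I → ℝ => ∑ i : Fin I, ∑ j : Fin I, c ^ 2 * (D (U i) * D (U j))) :=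
    integrable_finset_sum _ (fun i _ =>
      integrable_finset_sum _ (fun j _ => (IntP i j).const_mul _))
  have IntSum2 : Integrable (fun U : Fin I → ℝ => ∑ i : Fin I, 2 * c * (y - x) * D (U i)) :=
    integrable_finset_sum _ (fun i _ => (IntQ i).const_mul _)
  have hI' : (1:ℝ) ≤ (I:ℝ) := by exact_mod_cast hI
  have hI0 : (0:ℝ) < (I:ℝ) := by linarith
  have h2 : ∫ U : Fin I → ℝ, ∑ i : Fin I, ∑ j : Fin I, c ^ 2 * (D (U i) * D (U j))
      = (I:ℝ) * (c ^ 2 * B + ((I:ℝ) - 1) * (c ^ 2 * (A * A))) := by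
    rw [integral_finset_sum _ (fun i _ =>
      integrable_finset_sum _ (fun j _ => (IntP i j).const_mul _))]
    have hin : ∀ i : Fin I, ∫ U : Fin I → ℝ, ∑ j : Fin I, c ^ 2 * (D (U i) * D (U j))
        = c ^ 2 * B + ((I:ℝ) - 1) * (c ^ 2 * (A * A)) := by
      intro i
      rw [integral_finset_sum _ (fun j _ => (IntP i j).const_mul _)]
      rw [← Finset.add_sum_erase Finset.univ _ (Finset.mem_univ i)]
      rw [integral_const_mul, hPii i]
      rw [Finset.sum_congr rfl (fun j hj => by
        rw [integral_const_mul, hPij i j (Ne.symm (Finset.mem_erase.mp hj).1)])]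
      rw [Finset.sum_const, Finset.card_erase_of_mem (Finset.mem_univ i),
        Finset.card_univ, Fintype.card_fin, nsmul_eq_mul, Nat.cast_sub hI, Nat.cast_one]
    rw [Finset.sum_congr rfl (fun i _ => hin i), Finset.sum_const, Finset.card_univ,
      Fintype.card_fin, nsmul_eq_mul]
  have h3 : ∫ U : Fin I → ℝ, ∑ i : Fin I, 2 * c * (y - x) * D (U i)
      = (I:ℝ) * (2 * c * (y - x) * A) := by
    rw [integral_finset_sum _ (fun i _ => (IntQ i).const_mul _)]
    rw [Finset.sum_congr rfl (fun i _ => by rw [integral_const_mul, hQ i]),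
      Finset.sum_const, Finset.card_univ, Fintype.card_fin, nsmul_eq_mul]
  have h4 : ∫ _U : Fin I → ℝ, (y - x) ^ 2 = (y - x) ^ 2 := by
    simp [measure_univ]
  have step1 : ∫ U : Fin I → ℝ,
      ((fun U : Fin I → ℝ => ∑ i : Fin I, ∑ j : Fin I, c ^ 2 * (D (U i) * D (U j))) U
        + (fun U : Fin I → ℝ => (∑ i : Fin I, 2 * c * (y - x) * D (U i)) + (y - x) ^ 2) U)
      = (∫ U : Fin I → ℝ, ∑ i : Fin I, ∑ j : Fin I, c ^ 2 * (D (U i) * D (U j)))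
        + ∫ U : Fin I → ℝ, ((∑ i : Fin I, 2 * c * (y - x) * D (U i)) + (y - x) ^ 2) :=
    integral_add IntSum1 (IntSum2.add (integrable_const ((y - x) ^ 2)))
  have step2 : ∫ U : Fin I → ℝ,
      ((fun U : Fin I → ℝ => ∑ i : Fin I, 2 * c * (y - x) * D (U i)) U
        + (fun _ : Fin I → ℝ => (y - x) ^ 2) U)
      = (∫ U : Fin I → ℝ, ∑ i : Fin I, 2 * c * (y - x) * D (U i))
        + ∫ _U : Fin I → ℝ, (y - x) ^ 2 :=
    integral_add IntSum2 (integrable_const ((y - x) ^ 2))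
  simp only at step1 step2
  rw [step1, step2, h2, h3, h4]
  have heq : (I:ℝ) * (c ^ 2 * B + ((I:ℝ) - 1) * (c ^ 2 * (A * A)))
      + ((I:ℝ) * (2 * c * (y - x) * A) + (y - x) ^ 2)
      = c * |x - y| - (x - y) ^ 2 / (I:ℝ) := by
    rw [hc, hA, hB]
    field_simp
    ring
  rw [heq]
  have hpos : 0 ≤ (x - y) ^ 2 / (I:ℝ) := by positivity
  linarith
end

section
/- Let M > 0, I ≥ 1, d ≥ 1, and x, y ∈ [−M, M]^d. For each coordinate j and i ∈ [I], let U_i(j) be i.i.d. uniform on [−M, M], and define X̂(j) = (2M/I)·Σ_{i=1}^I (𝟙{U_i(j) ≤ x(j)} − 𝟙{U_i(j) ≤ y(j)}) + y(j). Then E[X̂] = x and E[‖X̂ − x‖²] ≤ (2M/I)·√d·‖x − y‖. -/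
open MeasureTheory

/-- The coordinate-wise boosted DAQ estimate
`X̂(j) = (2M/I)·Σᵢ (𝟙{Uᵢ(j) ≤ x(j)} − 𝟙{Uᵢ(j) ≤ y(j)}) + y(j)`. -/
noncomputable def daqEstimate (M : ℝ) (I d : ℕ) (x y : Fin d → ℝ)
    (U : Fin I → Fin d → ℝ) (j : Fin d) : ℝ :=
  (2 * M / I) * ∑ i : Fin I,
      ((if U i j ≤ x j then (1 : ℝ) else 0) - (if U i j ≤ y j then (1 : ℝ) else 0))
    + y j

lemma uniformIcc_prob_s8 {M : ℝ} (hM : 0 < M) : IsProbabilityMeasure (uniformIcc M) := by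
  constructor
  rw [uniformIcc, Measure.smul_apply, Measure.restrict_apply MeasurableSet.univ,
    Set.univ_inter, Real.volume_Icc]
  rw [smul_eq_mul, show M - -M = 2*M by ring, ENNReal.inv_mul_cancel]
  · simp [hM.le]; linarith
  · exact ENNReal.ofReal_ne_top

noncomputable def indF (c : ℝ) : ℝ → ℝ := fun t => if t ≤ c then 1 else 0

lemma indF_meas (c : ℝ) : Measurable (indF c) :=
  Measurable.ite measurableSet_Iic measurable_const measurable_const

lemma indF_abs_le (c t : ℝ) : |indF c t| ≤ 1 := by
  unfold indF; split_ifs <;> simp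

lemma integrable_of_bdd {α : Type*} [MeasurableSpace α] {μ : Measure α} [IsFiniteMeasure μ]
    {f : α → ℝ} (hf : Measurable f) (C : ℝ) (hC : ∀ x, |f x| ≤ C) : Integrable f μ :=
  Integrable.mono' (integrable_const C) hf.aestronglyMeasurable
    (ae_of_all _ fun x => by rw [Real.norm_eq_abs]; exact hC x)

lemma integral_indic {M c : ℝ} (hM : 0 < M) (hc : c ∈ Set.Icc (-M) M) :
    ∫ t, indF c t ∂(uniformIcc M) = (c + M) / (2*M) := by
  have h1 : indF c = Set.indicator (Set.Iic c) (fun _ => (1:ℝ)) := by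
    ext t; simp [indF, Set.indicator_apply, Set.mem_Iic]
  rw [uniformIcc, integral_smul_measure, h1, integral_indicator_const _ measurableSet_Iic,
    measureReal_def, Measure.restrict_apply measurableSet_Iic]
  have h2 : Set.Iic c ∩ Set.Icc (-M) M = Set.Icc (-M) c := by
    ext t
    simp only [Set.mem_inter_iff, Set.mem_Iic, Set.mem_Icc]
    constructor
    · rintro ⟨h1, h2, h3⟩; exact ⟨h2, h1⟩
    · rintro ⟨h1, h2⟩; exact ⟨h2, h1, le_trans h2 hc.2⟩
  rw [h2, Real.volume_Icc, smul_eq_mul, smul_eq_mul, mul_one, ENNReal.toReal_inv,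
    ENNReal.toReal_ofReal (by linarith), ENNReal.toReal_ofReal (by linarith [hc.1])]
  rw [show c - -M = c + M by ring, inv_mul_eq_div]

lemma integrable_indF {M : ℝ} (hM : 0 < M) (c : ℝ) : Integrable (indF c) (uniformIcc M) := by
  haveI := uniformIcc_prob_s8 hM
  exact integrable_of_bdd (indF_meas c) 1 (indF_abs_le c)

lemma integral_f {M a b : ℝ} (hM : 0 < M) (ha : a ∈ Set.Icc (-M) M) (hb : b ∈ Set.Icc (-M) M) :
    ∫ t, (indF a t - indF b t) ∂(uniformIcc M) = (a - b)/(2*M) := by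
  rw [integral_sub (integrable_indF hM a) (integrable_indF hM b),
    integral_indic hM ha, integral_indic hM hb]
  field_simp; ring

lemma integral_f_sq {M a b : ℝ} (hM : 0 < M) (ha : a ∈ Set.Icc (-M) M)
    (hb : b ∈ Set.Icc (-M) M) :
    ∫ t, (indF a t - indF b t)^2 ∂(uniformIcc M) = |a - b|/(2*M) := by
  have key : ∀ t, (indF a t - indF b t)^2 = indF a t + indF b t - 2 * indF (min a b) t := by
    intro t
    unfold indF
    by_cases h1 : t ≤ a <;> by_cases h2 : t ≤ b <;> simp [h1, h2, le_min_iff] <;> ring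
  simp_rw [key]
  have hmin : min a b ∈ Set.Icc (-M) M := by
    rcases le_total a b with h | h
    · rw [min_eq_left h]; exact ha
    · rw [min_eq_right h]; exact hb
  rw [integral_sub (f := fun t => indF a t + indF b t)
      (g := fun t => 2 * indF (min a b) t)
      ((integrable_indF hM a).add (integrable_indF hM b))
      ((integrable_indF hM (min a b)).const_mul 2),
    integral_add (integrable_indF hM a) (integrable_indF hM b), integral_const_mul,
    integral_indic hM ha, integral_indic hM hb, integral_indic hM hmin]
  rcases le_total a b with h | h
  · rw [min_eq_left h, abs_of_nonpos (by linarith)]; field_simp; ring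
  · rw [min_eq_right h, abs_of_nonneg (by linarith)]; field_simp; ring

lemma integral_pi_prod {ι : Type*} [Fintype ι] {E : Type*} [MeasurableSpace E]
    (μ : Measure E) [SigmaFinite μ] (f : ι → E → ℝ) :
    ∫ x : ι → E, ∏ i, f i (x i) ∂(Measure.pi fun _ => μ) = ∏ i, ∫ x, f i x ∂μ := by
  letI : MeasureSpace E := ⟨μ⟩
  exact integral_fintype_prod_eq_prod f (μ := fun _ => μ)

lemma pi_single {ι : Type*} [Fintype ι] [DecidableEq ι] {E : Type*} [MeasurableSpace E]
    (μ : Measure E) [IsProbabilityMeasure μ] (h : E → ℝ) (j : ι) :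
    ∫ u : ι → E, h (u j) ∂(Measure.pi fun _ => μ) = ∫ t, h t ∂μ := by
  have e1 : ∀ u : ι → E, h (u j) = ∏ i, (if i = j then h (u i) else 1) := by
    intro u
    rw [Finset.prod_eq_single j (fun i _ hij => by simp [hij]) (by simp)]
    simp
  simp_rw [e1]
  rw [integral_pi_prod μ (fun i t => if i = j then h t else 1)]
  rw [Finset.prod_eq_single j (fun i _ hij => by simp [hij]) (by simp)]
  simp

lemma pi_pair {ι : Type*} [Fintype ι] [DecidableEq ι] {E : Type*} [MeasurableSpace E]
    (μ : Measure E) [IsProbabilityMeasure μ] (h : E → ℝ) {i k : ι} (hik : i ≠ k) :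
    ∫ u : ι → E, h (u i) * h (u k) ∂(Measure.pi fun _ => μ)
      = (∫ t, h t ∂μ) * (∫ t, h t ∂μ) := by
  set f : ι → E → ℝ := fun m t => if m = i ∨ m = k then h t else 1 with hf
  have e1 : ∀ u : ι → E, h (u i) * h (u k) = ∏ m, f m (u m) := by
    intro u
    rw [← Finset.prod_subset (Finset.subset_univ ({i, k} : Finset ι))
      (fun m _ hm => by
        simp only [Finset.mem_insert, Finset.mem_singleton] at hm
        push_neg at hm
        simp [hf, hm.1, hm.2])]
    rw [Finset.prod_pair hik]
    simp [hf]
  simp_rw [e1]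
  rw [integral_pi_prod μ f]
  rw [← Finset.prod_subset (Finset.subset_univ ({i, k} : Finset ι))
      (fun m _ hm => by
        simp only [Finset.mem_insert, Finset.mem_singleton] at hm
        push_neg at hm
        simp [hf, hm.1, hm.2])]
  rw [Finset.prod_pair hik]
  simp [hf]

/-- Vector version of the boosted DAQ estimator (Lemma `l:daq`): with
`x, y ∈ [-M, M]^d` and `U_i(j)` i.i.d. uniform on `[-M, M]`, the estimate `X̂`
is unbiased, `E[X̂] = x`, and its MSE satisfies
`E[‖X̂ − x‖²] ≤ (2M/I)·√d·‖x − y‖`, with the Euclidean norm on `ℝ^d`. -/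
theorem daq_vector (M : ℝ) (hM : 0 < M) (I d : ℕ) (hI : 1 ≤ I) (hd : 1 ≤ d)
    (x y : Fin d → ℝ)
    (hx : ∀ j, x j ∈ Set.Icc (-M) M) (hy : ∀ j, y j ∈ Set.Icc (-M) M) :
    (∀ j : Fin d,
      ∫ U : Fin I → Fin d → ℝ, daqEstimate M I d x y U j
        ∂(Measure.pi fun _ : Fin I => Measure.pi fun _ : Fin d => uniformIcc M) = x j) ∧
    (∫ U : Fin I → Fin d → ℝ, ∑ j : Fin d, (daqEstimate M I d x y U j - x j) ^ 2
        ∂(Measure.pi fun _ : Fin I => Measure.pi fun _ : Fin d => uniformIcc M)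
      ≤ (2 * M / I) * Real.sqrt d * Real.sqrt (∑ j : Fin d, (x j - y j) ^ 2)) := by
  haveI := uniformIcc_prob_s8 hM
  set μ := uniformIcc M
  set ν : Measure (Fin d → ℝ) := Measure.pi fun _ => μ with hν
  set P : Measure (Fin I → Fin d → ℝ) := Measure.pi fun _ => ν with hP
  have hIne : (I : ℝ) ≠ 0 := Nat.cast_ne_zero.mpr (by omega)
  have hIpos : (0:ℝ) < I := by positivity
  have hMne : (2 * M) ≠ 0 := by positivity
  -- measurability of the basic functions
  have measf : ∀ (c : ℝ) (i : Fin I) (j : Fin d),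
      Measurable (fun U : Fin I → Fin d → ℝ => indF c (U i j)) := fun c i j =>
    (indF_meas c).comp ((measurable_pi_apply j).comp (measurable_pi_apply i))
  -- the key identity for daqEstimate in terms of indF
  have hdaq : ∀ U j, daqEstimate M I d x y U j
      = (2 * M / I) * ∑ i : Fin I, (indF (x j) (U i j) - indF (y j) (U i j)) + y j := by
    intro U j; rfl
  -- part 1: unbiasedness
  have part1 : ∀ j : Fin d,
      ∫ U : Fin I → Fin d → ℝ, daqEstimate M I d x y U j ∂P = x j := by
    intro j
    simp_rw [hdaq]
    have hint : ∀ i : Fin I, Integrable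
        (fun U : Fin I → Fin d → ℝ => indF (x j) (U i j) - indF (y j) (U i j)) P := by
      intro i
      exact integrable_of_bdd ((measf (x j) i j).sub (measf (y j) i j)) 2
        (fun U => (abs_sub (indF (x j) (U i j)) (indF (y j) (U i j))).trans
          (by linarith [indF_abs_le (x j) (U i j), indF_abs_le (y j) (U i j)]))
    rw [integral_add (((integrable_finset_sum _ (fun i _ => hint i)).const_mul _))
      (integrable_const _), integral_const]
    simp only [measureReal_def, measure_univ, ENNReal.toReal_one, one_smul]
    rw [integral_const_mul, integral_finset_sum _ (fun i _ => hint i)]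
    have hsingle : ∀ i : Fin I,
        ∫ U : Fin I → Fin d → ℝ, (indF (x j) (U i j) - indF (y j) (U i j)) ∂P
          = (x j - y j) / (2 * M) := by
      intro i
      have := pi_single (ι := Fin I) (E := Fin d → ℝ) ν
        (fun u => indF (x j) (u j) - indF (y j) (u j)) i
      rw [this, pi_single (ι := Fin d) (E := ℝ) μ
        (fun t => indF (x j) t - indF (y j) t) j, integral_f hM (hx j) (hy j)]
    simp_rw [hsingle]
    rw [Finset.sum_const, Finset.card_univ, Fintype.card_fin, nsmul_eq_mul]
    field_simp
    ring
  refine ⟨part1, ?_⟩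
  -- part 2: MSE bound
  -- per-coordinate bound
  have perj : ∀ j : Fin d,
      ∫ U : Fin I → Fin d → ℝ, (daqEstimate M I d x y U j - x j) ^ 2 ∂P
        ≤ (2 * M / I) * |x j - y j| := by
    intro j
    set p : ℝ := (x j - y j) / (2 * M) with hp
    set g : ℝ → ℝ := fun t => indF (x j) t - indF (y j) t - p with hg
    have hgmeas : Measurable g := ((indF_meas _).sub (indF_meas _)).sub measurable_const
    have hpabs : |p| ≤ 1 := by
      rw [hp, abs_div, abs_of_pos (by positivity : (0:ℝ) < 2*M), div_le_one (by positivity)]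
      have h1 := (hx j).1; have h2 := (hx j).2; have h3 := (hy j).1; have h4 := (hy j).2
      rw [abs_sub_le_iff]; constructor <;> linarith
    have hgabs : ∀ t, |g t| ≤ 3 := by
      intro t
      have := indF_abs_le (x j) t; have := indF_abs_le (y j) t
      rw [hg]
      calc |indF (x j) t - indF (y j) t - p|
          ≤ |indF (x j) t - indF (y j) t| + |p| := abs_sub _ _
        _ ≤ (|indF (x j) t| + |indF (y j) t|) + |p| := by
            linarith [abs_sub (indF (x j) t) (indF (y j) t)]
        _ ≤ 3 := by linarith
    -- identity: daq - x = (2M/I) * Σ g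
    have hid : ∀ U : Fin I → Fin d → ℝ,
        daqEstimate M I d x y U j - x j = (2 * M / I) * ∑ i : Fin I, g (U i j) := by
      intro U
      rw [hdaq]
      simp_rw [hg, Finset.sum_sub_distrib, Finset.sum_const, Finset.card_univ,
        Fintype.card_fin, nsmul_eq_mul, hp]
      field_simp
      ring
    have hsq : ∀ U : Fin I → Fin d → ℝ,
        (daqEstimate M I d x y U j - x j) ^ 2
          = (2 * M / I) ^ 2 * ∑ i : Fin I, ∑ k : Fin I, g (U i j) * g (U k j) := by
      intro U
      rw [hid, mul_pow]
      congr 1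
      rw [sq, Finset.sum_mul_sum]
    simp_rw [hsq]
    -- integrability of the cross terms
    have hintik : ∀ i k : Fin I, Integrable
        (fun U : Fin I → Fin d → ℝ => g (U i j) * g (U k j)) P := by
      intro i k
      refine integrable_of_bdd
        ((hgmeas.comp ((measurable_pi_apply j).comp (measurable_pi_apply i))).mul
         (hgmeas.comp ((measurable_pi_apply j).comp (measurable_pi_apply k)))) 9 ?_
      intro U
      rw [abs_mul]
      calc |g (U i j)| * |g (U k j)| ≤ 3 * 3 :=
            mul_le_mul (hgabs _) (hgabs _) (abs_nonneg _) (by norm_num)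
        _ = 9 := by norm_num
    rw [integral_const_mul, integral_finset_sum _
      (fun i _ => integrable_finset_sum _ (fun k _ => hintik i k))]
    have hswap : ∀ i : Fin I,
        ∫ U : Fin I → Fin d → ℝ, ∑ k : Fin I, g (U i j) * g (U k j) ∂P
          = ∑ k : Fin I, ∫ U : Fin I → Fin d → ℝ, g (U i j) * g (U k j) ∂P := by
      intro i; exact integral_finset_sum _ (fun k _ => hintik i k)
    simp_rw [hswap]
    -- the value of each cross term
    have hEg : ∫ t, g t ∂μ = 0 := by
      rw [hg]
      rw [integral_sub (f := fun t => indF (x j) t - indF (y j) t)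
        ((integrable_indF hM _).sub (integrable_indF hM _)) (integrable_const p),
        integral_const]
      simp only [measureReal_def, measure_univ, ENNReal.toReal_one, one_smul]
      rw [integral_f hM (hx j) (hy j), hp, sub_self]
    have hEg2 : ∫ t, g t * g t ∂μ ≤ |x j - y j| / (2 * M) := by
      have hexp : ∀ t, g t * g t
          = (indF (x j) t - indF (y j) t)^2
            - 2 * p * (indF (x j) t - indF (y j) t) + p^2 := by
        intro t; rw [hg]; ring
      simp_rw [hexp]
      have int1 : Integrable (fun t => (indF (x j) t - indF (y j) t)^2) μ := by
        refine integrable_of_bdd (((indF_meas _).sub (indF_meas _)).pow_const 2) 4 ?_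
        intro t
        rw [abs_pow, sq]
        calc |indF (x j) t - indF (y j) t| * |indF (x j) t - indF (y j) t| ≤ 2 * 2 := by
              have h := (abs_sub (indF (x j) t) (indF (y j) t)).trans
                (by linarith [indF_abs_le (x j) t, indF_abs_le (y j) t] : |indF (x j) t| + |indF (y j) t| ≤ 2)
              exact mul_le_mul h h (abs_nonneg _) (by norm_num)
          _ = 4 := by norm_num
      have int2 : Integrable (fun t => 2 * p * (indF (x j) t - indF (y j) t)) μ :=
        ((integrable_indF hM _).sub (integrable_indF hM _)).const_mul _
      rw [integral_add (f := fun t => (indF (x j) t - indF (y j) t)^2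
            - 2 * p * (indF (x j) t - indF (y j) t)) (g := fun _ => p^2)
          (int1.sub int2) (integrable_const _),
        integral_sub (f := fun t => (indF (x j) t - indF (y j) t)^2)
          (g := fun t => 2 * p * (indF (x j) t - indF (y j) t)) int1 int2,
        integral_const_mul, integral_const]
      simp only [measureReal_def, measure_univ, ENNReal.toReal_one, one_smul]
      rw [integral_f_sq hM (hx j) (hy j), integral_f hM (hx j) (hy j), ← hp]
      nlinarith [sq_nonneg p]
    have hcross : ∀ i k : Fin I, i ≠ k →
        ∫ U : Fin I → Fin d → ℝ, g (U i j) * g (U k j) ∂P = 0 := by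
      intro i k hik
      have := pi_pair (ι := Fin I) (E := Fin d → ℝ) ν (fun u => g (u j)) hik
      rw [this, pi_single (ι := Fin d) (E := ℝ) μ g j, hEg, mul_zero]
    have hdiag : ∀ i : Fin I,
        ∫ U : Fin I → Fin d → ℝ, g (U i j) * g (U i j) ∂P ≤ |x j - y j| / (2 * M) := by
      intro i
      have := pi_single (ι := Fin I) (E := Fin d → ℝ) ν (fun u => g (u j) * g (u j)) i
      rw [this, pi_single (ι := Fin d) (E := ℝ) μ (fun t => g t * g t) j]
      exact hEg2
    -- sum up
    have hsum : ∑ i : Fin I, ∑ k : Fin I, ∫ U : Fin I → Fin d → ℝ, g (U i j) * g (U k j) ∂P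
        ≤ I * (|x j - y j| / (2 * M)) := by
      have step : ∀ i : Fin I,
          ∑ k : Fin I, ∫ U : Fin I → Fin d → ℝ, g (U i j) * g (U k j) ∂P
            ≤ |x j - y j| / (2 * M) := by
        intro i
        rw [Finset.sum_eq_single i (fun k _ hki => hcross i k (Ne.symm hki)) (by simp)]
        exact hdiag i
      calc ∑ i : Fin I, ∑ k : Fin I, ∫ U : Fin I → Fin d → ℝ, g (U i j) * g (U k j) ∂P
          ≤ ∑ _i : Fin I, |x j - y j| / (2 * M) :=
            Finset.sum_le_sum (fun i _ => step i)
        _ = I * (|x j - y j| / (2 * M)) := by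
            rw [Finset.sum_const, Finset.card_univ, Fintype.card_fin, nsmul_eq_mul]
    calc (2 * M / I) ^ 2 * ∑ i : Fin I, ∑ k : Fin I,
          ∫ U : Fin I → Fin d → ℝ, g (U i j) * g (U k j) ∂P
        ≤ (2 * M / I) ^ 2 * (I * (|x j - y j| / (2 * M))) :=
          mul_le_mul_of_nonneg_left hsum (by positivity)
      _ = (2 * M / I) * |x j - y j| := by field_simp
  -- sum over coordinates and Cauchy-Schwarz
  have hint2 : ∀ j : Fin d, Integrable
      (fun U : Fin I → Fin d → ℝ => (daqEstimate M I d x y U j - x j) ^ 2) P := by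
    intro j
    have hmeas : Measurable (fun U : Fin I → Fin d → ℝ => daqEstimate M I d x y U j - x j) := by
      have : Measurable (fun U : Fin I → Fin d → ℝ =>
          ∑ i : Fin I, (indF (x j) (U i j) - indF (y j) (U i j))) :=
        Finset.measurable_sum _ (fun i _ => (measf (x j) i j).sub (measf (y j) i j))
      simp_rw [hdaq]
      exact ((this.const_mul _).add_const _).sub_const _
    have hb : ∀ U : Fin I → Fin d → ℝ, |daqEstimate M I d x y U j - x j| ≤ 6 * M := by
      intro U
      rw [hdaq]
      have hsum : |∑ i : Fin I, (indF (x j) (U i j) - indF (y j) (U i j))| ≤ 2 * I := by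
        calc |∑ i : Fin I, (indF (x j) (U i j) - indF (y j) (U i j))|
            ≤ ∑ i : Fin I, |indF (x j) (U i j) - indF (y j) (U i j)| :=
              Finset.abs_sum_le_sum_abs _ _
          _ ≤ ∑ _i : Fin I, (2:ℝ) := Finset.sum_le_sum (fun i _ =>
              (abs_sub _ _).trans (by
                linarith [indF_abs_le (x j) (U i j), indF_abs_le (y j) (U i j)]))
          _ = 2 * I := by
              rw [Finset.sum_const, Finset.card_univ, Fintype.card_fin, nsmul_eq_mul]; ring
      have h1 : |(2 * M / I) * ∑ i : Fin I, (indF (x j) (U i j) - indF (y j) (U i j))| ≤ 4 * M := by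
        rw [abs_mul, abs_of_pos (by positivity : (0:ℝ) < 2 * M / I)]
        calc (2 * M / I) * |∑ i : Fin I, (indF (x j) (U i j) - indF (y j) (U i j))|
            ≤ (2 * M / I) * (2 * I) := by
              apply mul_le_mul_of_nonneg_left _ (by positivity)
              exact hsum
          _ = 4 * M := by field_simp; ring
      have h2 : |y j| ≤ M := abs_le.mpr ⟨(hy j).1, (hy j).2⟩
      have h3 : |x j| ≤ M := abs_le.mpr ⟨(hx j).1, (hx j).2⟩
      calc |(2 * M / I) * ∑ i : Fin I, (indF (x j) (U i j) - indF (y j) (U i j)) + y j - x j|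
          ≤ |(2 * M / I) * ∑ i : Fin I, (indF (x j) (U i j) - indF (y j) (U i j))|
            + |y j| + |x j| := by
            calc _ ≤ |(2 * M / I) * ∑ i : Fin I, (indF (x j) (U i j) - indF (y j) (U i j)) + y j|
                + |x j| := abs_sub _ _
              _ ≤ _ := by linarith [abs_add_le ((2 * M / I) * ∑ i : Fin I,
                  (indF (x j) (U i j) - indF (y j) (U i j))) (y j)]
        _ ≤ 6 * M := by linarith
    refine integrable_of_bdd (hmeas.pow_const 2) ((6*M)^2) ?_
    intro U
    rw [abs_pow, sq, sq]
    exact mul_le_mul (hb U) (hb U) (abs_nonneg _) (by positivity)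
  rw [integral_finset_sum _ (fun j _ => hint2 j)]
  have step1 : ∑ j : Fin d, ∫ U : Fin I → Fin d → ℝ, (daqEstimate M I d x y U j - x j) ^ 2 ∂P
      ≤ (2 * M / I) * ∑ j : Fin d, |x j - y j| := by
    rw [Finset.mul_sum]
    exact Finset.sum_le_sum (fun j _ => perj j)
  refine step1.trans ?_
  rw [mul_assoc]
  apply mul_le_mul_of_nonneg_left _ (by positivity)
  -- Cauchy-Schwarz: Σ |z j| ≤ √d · √(Σ z j ^ 2)
  have hcs : (∑ j : Fin d, |x j - y j|) ^ 2 ≤ d * ∑ j : Fin d, (x j - y j) ^ 2 := by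
    have := sq_sum_le_card_mul_sum_sq (s := (Finset.univ : Finset (Fin d)))
      (f := fun j => |x j - y j|)
    simpa [sq_abs, Finset.card_univ] using this
  have h0 : (0:ℝ) ≤ ∑ j : Fin d, |x j - y j| := Finset.sum_nonneg (fun j _ => abs_nonneg _)
  calc ∑ j : Fin d, |x j - y j|
      = Real.sqrt ((∑ j : Fin d, |x j - y j|) ^ 2) := (Real.sqrt_sq h0).symm
    _ ≤ Real.sqrt (d * ∑ j : Fin d, (x j - y j) ^ 2) := Real.sqrt_le_sqrt hcs
    _ = Real.sqrt d * Real.sqrt (∑ j : Fin d, (x j - y j) ^ 2) := by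
        rw [Real.sqrt_mul (by positivity)]
end

section
/- Let V be uniform on {−1,1}^d and let X be a random point in 𝒳 = [−D/(2√d), D/(2√d)]^d (possibly depending on observations of V through a channel). With f_V as the hard instance above, E[f_V(X) − f_V(x_V*)] ≥ (Dσδ/6)·(1 − (1/d)·Σ_{i=1}^d d_TV(p_{+i}, p_{−i})), where p_{+i}, p_{−i} denote the distributions of the observations given V(i) = +1 and V(i) = −1 respectively, and X is a measurable function of the observations. -/
open MeasureTheory ProbabilityTheory

/-- Total variation distance between two measures. -/
noncomputable def tvDist {α : Type*} [MeasurableSpace α] (p q : Measure α) : ℝ :=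
  sSup {r | ∃ s : Set α, MeasurableSet s ∧ r = |(p s).toReal - (q s).toReal|}

/-- The reduction from optimization to hypothesis testing in the lower bound
(Theorem `t:OTAlb`).  Let `V` be uniform on `{−1,1}^d` coordinate-wise, let the
estimate `X = est(O)` be a measurable function of the observations `O` taking
values in `𝒳 = [−D/(2√d), D/(2√d)]^d`, and let
`f_v(x) = (2σδ/√d)·Σᵢ |x(i) − v(i)D/(2√d)|` (whose minimum value is `0`).
Then `E[f_V(X) − f_V(x_V*)] ≥ (Dσδ/6)·(1 − (1/d)·Σᵢ d_TV(p₊ᵢ, p₋ᵢ))`, where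
`p₊ᵢ, p₋ᵢ` are the laws of `O` conditionally on `V(i) = ±1`. -/
theorem lower_bound_tv_reduction
    {Ω 𝒪 : Type*} [MeasurableSpace Ω] [MeasurableSpace 𝒪]
    (P : Measure Ω) [IsProbabilityMeasure P]
    (d : ℕ) (hd : 1 ≤ d) (δ σ D : ℝ)
    (hδ : δ ∈ Set.Ioo (0 : ℝ) (1 / 2)) (hσ : 0 < σ) (hD : 0 < D)
    (V : Ω → Fin d → ℝ) (hVmeas : Measurable V)
    (hVsign : ∀ ω i, V ω i = 1 ∨ V ω i = -1)
    (hVprior : ∀ i, P {ω | V ω i = 1} = 1 / 2)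
    (O : Ω → 𝒪) (hO : Measurable O)
    (est : 𝒪 → EuclideanSpace ℝ (Fin d)) (hest : Measurable est)
    (hrange : ∀ ω, ∀ i, |est (O ω) i| ≤ D / (2 * Real.sqrt d))
    (f : (Fin d → ℝ) → EuclideanSpace ℝ (Fin d) → ℝ)
    (hf : ∀ v x, f v x = (2 * σ * δ / Real.sqrt d)
                          * ∑ i : Fin d, |x i - v i * D / (2 * Real.sqrt d)|)
    (hint : Integrable (fun ω => f (V ω) (est (O ω))) P) :
    ∫ ω, f (V ω) (est (O ω)) ∂P
      ≥ (D * σ * δ / 6) *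
          (1 - (1 / d) * ∑ i : Fin d,
            tvDist (Measure.map O (P[|{ω | V ω i = 1}]))
                   (Measure.map O (P[|{ω | V ω i = -1}]))) := by
  classical
  have hd0 : (0:ℝ) < d := by exact_mod_cast hd
  have hsd : (0:ℝ) < Real.sqrt d := Real.sqrt_pos.mpr hd0
  have hdd : Real.sqrt d * Real.sqrt d = d := Real.mul_self_sqrt hd0.le
  have hc0 : (0:ℝ) < D / (2 * Real.sqrt d) := by positivity
  have hXi : ∀ i : Fin d, Measurable (fun ω => est (O ω) i) := fun i =>
    (measurable_pi_apply i).comp ((WithLp.measurable_ofLp _ _).comp (hest.comp hO))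
  have hVi : ∀ i : Fin d, Measurable (fun ω => V ω i) := fun i =>
    (measurable_pi_apply i).comp hVmeas
  have hterm_meas : ∀ i : Fin d,
      Measurable (fun ω => |est (O ω) i - V ω i * D / (2 * Real.sqrt d)|) := fun i =>
    ((hXi i).sub (((hVi i).mul_const D).div_const _)).abs
  have hterm_int : ∀ i : Fin d,
      Integrable (fun ω => |est (O ω) i - V ω i * D / (2 * Real.sqrt d)|) P := by
    intro i
    refine (integrable_const (D / (2 * Real.sqrt d) + D / (2 * Real.sqrt d))).mono'
      (hterm_meas i).aestronglyMeasurable ?_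
    refine Filter.Eventually.of_forall fun ω => ?_
    have hVabs : |V ω i| = 1 := by rcases hVsign ω i with h | h <;> simp [h]
    have h1 : |V ω i * D / (2 * Real.sqrt d)| = D / (2 * Real.sqrt d) := by
      rw [abs_div, abs_mul, hVabs, one_mul, abs_of_pos hD,
        abs_of_pos (by positivity : (0:ℝ) < 2 * Real.sqrt d)]
    have h2 : |est (O ω) i - V ω i * D / (2 * Real.sqrt d)|
        ≤ |est (O ω) i| + |V ω i * D / (2 * Real.sqrt d)| := abs_sub _ _
    rw [Real.norm_eq_abs, abs_abs]
    calc |est (O ω) i - V ω i * D / (2 * Real.sqrt d)|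
        ≤ |est (O ω) i| + |V ω i * D / (2 * Real.sqrt d)| := h2
      _ ≤ D / (2 * Real.sqrt d) + D / (2 * Real.sqrt d) := by
          rw [h1]; exact add_le_add_left (hrange ω i) _
  -- per-coordinate key inequality
  have key : ∀ i : Fin d,
      (D * σ * δ / 6) * (1 / d) *
        (1 - tvDist (Measure.map O (P[|{ω | V ω i = 1}]))
                    (Measure.map O (P[|{ω | V ω i = -1}])))
      ≤ (2 * σ * δ / Real.sqrt d) *
          ∫ ω, |est (O ω) i - V ω i * D / (2 * Real.sqrt d)| ∂P := by
    intro i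
    set Ai : Set Ω := {ω | V ω i = 1} with hAi
    set Bi : Set Ω := {ω | V ω i = -1} with hBi
    have hAmeas : MeasurableSet Ai := (hVi i) (measurableSet_singleton 1)
    have hBmeas : MeasurableSet Bi := (hVi i) (measurableSet_singleton (-1))
    have hBc : Bi = Aiᶜ := by
      ext ω
      simp only [hAi, hBi, Set.mem_setOf_eq, Set.mem_compl_iff]
      rcases hVsign ω i with h | h <;> simp [h] <;> norm_num
    have hPA : P Ai = 1/2 := hVprior i
    have hPB : P Bi = 1/2 := by
      rw [hBc, measure_compl hAmeas (measure_ne_top _ _), measure_univ, hPA]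
      norm_num
    have hPA0 : P Ai ≠ 0 := by rw [hPA]; norm_num
    have hPB0 : P Bi ≠ 0 := by rw [hPB]; norm_num
    have hcondA : IsProbabilityMeasure (P[|Ai]) := cond_isProbabilityMeasure hPA0
    have hcondB : IsProbabilityMeasure (P[|Bi]) := cond_isProbabilityMeasure hPB0
    set μp : Measure 𝒪 := Measure.map O (P[|Ai]) with hμp
    set μm : Measure 𝒪 := Measure.map O (P[|Bi]) with hμm
    have hμpprob : IsProbabilityMeasure μp := Measure.isProbabilityMeasure_map hO.aemeasurable
    have hμmprob : IsProbabilityMeasure μm := Measure.isProbabilityMeasure_map hO.aemeasurable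
    set S : Set 𝒪 := {o | 0 ≤ est o i} with hSdef
    have hS : MeasurableSet S :=
      measurableSet_le measurable_const ((measurable_pi_apply i).comp ((WithLp.measurable_ofLp _ _).comp hest))
    set a : ℝ := (μp S).toReal with ha
    set b : ℝ := (μm S).toReal with hb
    -- tvDist facts
    have hbdd : BddAbove {r | ∃ s : Set 𝒪, MeasurableSet s ∧
        r = |(μp s).toReal - (μm s).toReal|} := by
      refine ⟨1, ?_⟩
      rintro r ⟨s, hs, rfl⟩
      have h1 : (μp s).toReal ≤ 1 := by
        have := ENNReal.toReal_mono ENNReal.one_ne_top (prob_le_one (μ := μp) (s := s))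
        simpa using this
      have h2 : (μm s).toReal ≤ 1 := by
        have := ENNReal.toReal_mono ENNReal.one_ne_top (prob_le_one (μ := μm) (s := s))
        simpa using this
      have h3 : (0:ℝ) ≤ (μp s).toReal := ENNReal.toReal_nonneg
      have h4 : (0:ℝ) ≤ (μm s).toReal := ENNReal.toReal_nonneg
      rw [abs_sub_le_iff]; constructor <;> linarith
    have htv_ge : a - b ≤ tvDist μp μm :=
      le_trans (le_abs_self _) (le_csSup hbdd ⟨S, hS, rfl⟩)
    have htv_le_one : tvDist μp μm ≤ 1 := by
      refine csSup_le ⟨0, ∅, MeasurableSet.empty, by simp⟩ ?_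
      rintro r ⟨s, hs, rfl⟩
      have h1 : (μp s).toReal ≤ 1 := by
        have := ENNReal.toReal_mono ENNReal.one_ne_top (prob_le_one (μ := μp) (s := s))
        simpa using this
      have h2 : (μm s).toReal ≤ 1 := by
        have := ENNReal.toReal_mono ENNReal.one_ne_top (prob_le_one (μ := μm) (s := s))
        simpa using this
      have h3 : (0:ℝ) ≤ (μp s).toReal := ENNReal.toReal_nonneg
      have h4 : (0:ℝ) ≤ (μm s).toReal := ENNReal.toReal_nonneg
      rw [abs_sub_le_iff]; constructor <;> linarith
    -- the "wrong sign" event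
    set W : Set Ω := (Ai ∩ O ⁻¹' Sᶜ) ∪ (Bi ∩ O ⁻¹' S) with hW
    have hWmeas : MeasurableSet W :=
      (hAmeas.inter (hO hS.compl)).union (hBmeas.inter (hO hS))
    have hdisj : Disjoint (Ai ∩ O ⁻¹' Sᶜ) (Bi ∩ O ⁻¹' S) := by
      rw [Set.disjoint_left]
      rintro ω ⟨h1, -⟩ ⟨h2, -⟩
      have e1 : V ω i = 1 := h1
      have e2 : V ω i = -1 := h2
      rw [e1] at e2; norm_num at e2
    have hP1 : P (Ai ∩ O ⁻¹' Sᶜ) = μp Sᶜ * (1/2) := by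
      rw [hμp, Measure.map_apply hO hS.compl, ← hPA,
        cond_mul_eq_inter hAmeas (O ⁻¹' Sᶜ)]
    have hP2 : P (Bi ∩ O ⁻¹' S) = μm S * (1/2) := by
      rw [hμm, Measure.map_apply hO hS, ← hPB, cond_mul_eq_inter hBmeas (O ⁻¹' S)]
    have hμpc : (μp Sᶜ).toReal = 1 - a := by
      rw [prob_compl_eq_one_sub hS,
        ENNReal.toReal_sub_of_le prob_le_one ENNReal.one_ne_top]
      simp [ha]
    have hPWtoReal : (P W).toReal = (1 - a) * (1/2) + b * (1/2) := by
      rw [hW, measure_union hdisj (hBmeas.inter (hO hS)), hP1, hP2,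
        ENNReal.toReal_add (ENNReal.mul_ne_top (measure_ne_top _ _) (by norm_num)) (ENNReal.mul_ne_top (measure_ne_top _ _) (by norm_num)),
        ENNReal.toReal_mul, ENNReal.toReal_mul, hμpc]
      norm_num [hb]
    -- pointwise bound and integration
    have hpt : ∀ ω, W.indicator (fun _ => D / (2 * Real.sqrt d)) ω
        ≤ |est (O ω) i - V ω i * D / (2 * Real.sqrt d)| := by
      intro ω
      by_cases hω : ω ∈ W
      · rw [Set.indicator_of_mem hω]
        rcases hω with ⟨h1, h2⟩ | ⟨h1, h2⟩
        · have e1 : V ω i = 1 := h1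
          have e2 : est (O ω) i < 0 := by
            have : ¬ (0 ≤ est (O ω) i) := h2
            linarith [lt_of_not_ge this]
          rw [e1, one_mul, abs_of_nonpos (by linarith)]
          linarith
        · have e1 : V ω i = -1 := h1
          have e2 : (0:ℝ) ≤ est (O ω) i := h2
          have e3 : (-1) * D / (2 * Real.sqrt d) = -(D / (2 * Real.sqrt d)) := by ring
          rw [e1, e3, sub_neg_eq_add, abs_of_nonneg (by linarith)]
          linarith
      · rw [Set.indicator_of_notMem hω]; positivity
    have hind_int : Integrable (W.indicator fun _ => D / (2 * Real.sqrt d)) P :=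
      (integrable_const _).indicator hWmeas
    have hIi : D / (2 * Real.sqrt d) * (P W).toReal
        ≤ ∫ ω, |est (O ω) i - V ω i * D / (2 * Real.sqrt d)| ∂P := by
      have := integral_mono hind_int (hterm_int i) hpt
      rwa [integral_indicator_const _ hWmeas, smul_eq_mul, mul_comm] at this
    have hPWge : (1 - tvDist μp μm) / 2 ≤ (P W).toReal := by
      rw [hPWtoReal]; linarith
    have hnn : 0 ≤ 1 - tvDist μp μm := by linarith
    have hδ0 : (0:ℝ) < δ := hδ.1
    have hpos : (0:ℝ) ≤ 2 * σ * δ / Real.sqrt d :=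
      div_nonneg (by nlinarith) hsd.le
    have hM : 0 ≤ D * σ * δ * (1 - tvDist μp μm) := by
      have := mul_nonneg (mul_nonneg (mul_nonneg hD.le hσ.le) hδ0.le) hnn
      linarith
    have hR : (2 * σ * δ / Real.sqrt d) * (D / (2 * Real.sqrt d) * ((1 - tvDist μp μm) / 2))
        = D * σ * δ * (1 - tvDist μp μm) / (2 * (Real.sqrt d * Real.sqrt d)) := by
      field_simp
    calc (D * σ * δ / 6) * (1 / d) * (1 - tvDist μp μm)
        ≤ (2 * σ * δ / Real.sqrt d) * (D / (2 * Real.sqrt d) * ((1 - tvDist μp μm) / 2)) := by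
          rw [hR, hdd]
          rw [show (D * σ * δ / 6) * (1 / d) * (1 - tvDist μp μm)
              = D * σ * δ * (1 - tvDist μp μm) / (6 * d) by ring]
          rw [div_le_div_iff₀ (by positivity) (by positivity)]
          nlinarith [mul_nonneg hM hd0.le]
      _ ≤ (2 * σ * δ / Real.sqrt d) * (D / (2 * Real.sqrt d) * (P W).toReal) :=
          mul_le_mul_of_nonneg_left
            (mul_le_mul_of_nonneg_left hPWge hc0.le) hpos
      _ ≤ (2 * σ * δ / Real.sqrt d) *
            ∫ ω, |est (O ω) i - V ω i * D / (2 * Real.sqrt d)| ∂P :=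
          mul_le_mul_of_nonneg_left hIi hpos
  -- assemble
  have hsum : ∫ ω, f (V ω) (est (O ω)) ∂P
      = ∑ i : Fin d, (2 * σ * δ / Real.sqrt d) *
          ∫ ω, |est (O ω) i - V ω i * D / (2 * Real.sqrt d)| ∂P := by
    simp_rw [hf]
    rw [integral_const_mul, integral_finset_sum _ (fun i _ => hterm_int i), Finset.mul_sum]
  rw [ge_iff_le, hsum]
  have hsplit : (D * σ * δ / 6) *
      (1 - (1 / d) * ∑ i : Fin d,
        tvDist (Measure.map O (P[|{ω | V ω i = 1}]))
               (Measure.map O (P[|{ω | V ω i = -1}])))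
      = ∑ i : Fin d, (D * σ * δ / 6) * (1 / d) *
          (1 - tvDist (Measure.map O (P[|{ω | V ω i = 1}]))
                      (Measure.map O (P[|{ω | V ω i = -1}]))) := by
    have hdne : (d:ℝ) ≠ 0 := ne_of_gt hd0
    symm
    calc ∑ i : Fin d, (D * σ * δ / 6) * (1 / d) *
          (1 - tvDist (Measure.map O (P[|{ω | V ω i = 1}]))
                      (Measure.map O (P[|{ω | V ω i = -1}])))
        = (D * σ * δ / 6) * (1 / d) * ∑ i : Fin d,
            (1 - tvDist (Measure.map O (P[|{ω | V ω i = 1}]))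
                        (Measure.map O (P[|{ω | V ω i = -1}]))) := by
          rw [Finset.mul_sum]
      _ = (D * σ * δ / 6) * (1 / d) * ((d:ℝ) - ∑ i : Fin d,
            tvDist (Measure.map O (P[|{ω | V ω i = 1}]))
                   (Measure.map O (P[|{ω | V ω i = -1}]))) := by
          rw [Finset.sum_sub_distrib, Finset.sum_const, Finset.card_fin, nsmul_eq_mul, mul_one]
      _ = (D * σ * δ / 6) *
          (1 - (1 / d) * ∑ i : Fin d,
            tvDist (Measure.map O (P[|{ω | V ω i = 1}]))
                   (Measure.map O (P[|{ω | V ω i = -1}]))) := by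
          field_simp
  rw [hsplit]
  exact Finset.sum_le_sum fun i _ => key i
end
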